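/- For all matrix indices i, j with 1 ≤ i, j ≤ m, if C_{i₁,j₁} ⇒* w_{i₂}^{j₂+2δ} in the grammar G, then there exists k with 1 ≤ k ≤ m such that a_{ik} = 1 and b_{kj} = 1 (equivalently, c_{ij} = 1 in the Boolean product C = A×B). -/

import Mathlib

/- Formalization of (part of) the reduction of Boolean matrix multiplication
to context-free grammar parsing (Lee, "Fast context-free grammar parsing
requires fast Boolean matrix multiplication"). -/

namespace CFGBMM

/-- Nonterminals of the grammars of the reduction. -/
inductive NT : Type where
  | S : NT                 -- start symbol
  | T : NT                 -- extra symbol of the CNF grammar G'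
  | W : NT                 -- derives arbitrary nonempty substrings
  | Wl : ℕ → NT            -- `W_ℓ` of G'
  | X : ℕ → NT             -- `X_ℓ` of G'
  | A : ℕ → ℕ → NT         -- `A_{p,q}`
  | B : ℕ → ℕ → NT         -- `B_{p,q}`
  | C : ℕ → ℕ → NT         -- `C_{p,q}`
deriving DecidableEq

abbrev Sym : Type := Symbol ℕ NT

/-- `d = ⌈m^(1/3)⌉`. -/
noncomputable def dOf (m : ℕ) : ℕ := ⌈(m : ℝ) ^ ((1 : ℝ) / 3)⌉₊

/-- The substring `w_ℓ ⋯ w_r` of the input string `w = w₁ ⋯ w_{3d+6}`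
(in which `w_ℓ` is just the terminal `ℓ`), as a sentential form. -/
def seg (l r : ℕ) : List Sym := (List.range' l (r + 1 - l)).map Symbol.terminal

/-- W-rules of `G`:  `W → w_ℓ W | w_ℓ`  for `1 ≤ ℓ ≤ 3d+6`. -/
def WRules (d : ℕ) : Set (ContextFreeRule ℕ NT) :=
  {r | ∃ l, 1 ≤ l ∧ l ≤ 3 * d + 6 ∧
    (r = ⟨NT.W, [Symbol.terminal l, Symbol.nonterminal NT.W]⟩ ∨
     r = ⟨NT.W, [Symbol.terminal l]⟩)}

/-- A-rules of `G`:  `A_{i₁,j₁} → w_{i₂} W w_{j₂+δ}`  for each nonzero entry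
`a_{ij}` of `A` (here `i₁ = ⌊i/d⌋`, `i₂ = (i mod d) + 2`, `δ = d + 2`). -/
def ARules (m d : ℕ) (a : ℕ → ℕ → ℕ) : Set (ContextFreeRule ℕ NT) :=
  {r | ∃ i j, 1 ≤ i ∧ i ≤ m ∧ 1 ≤ j ∧ j ≤ m ∧ a i j = 1 ∧
    r = ⟨NT.A (i / d) (j / d),
      [Symbol.terminal (i % d + 2), Symbol.nonterminal NT.W,
       Symbol.terminal (j % d + 2 + (d + 2))]⟩}

/-- B-rules of `G`:  `B_{i₁,j₁} → w_{i₂+1+δ} W w_{j₂+2δ}`  for each nonzero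
entry `b_{ij}` of `B`. -/
def BRules (m d : ℕ) (b : ℕ → ℕ → ℕ) : Set (ContextFreeRule ℕ NT) :=
  {r | ∃ i j, 1 ≤ i ∧ i ≤ m ∧ 1 ≤ j ∧ j ≤ m ∧ b i j = 1 ∧
    r = ⟨NT.B (i / d) (j / d),
      [Symbol.terminal (i % d + 2 + 1 + (d + 2)), Symbol.nonterminal NT.W,
       Symbol.terminal (j % d + 2 + 2 * (d + 2))]⟩}

/-- C-rules:  `C_{p,q} → A_{p,r} B_{r,q}`  for all `0 ≤ p, q, r ≤ d²`. -/
def CRules (d : ℕ) : Set (ContextFreeRule ℕ NT) :=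
  {r | ∃ p q t, p ≤ d ^ 2 ∧ q ≤ d ^ 2 ∧ t ≤ d ^ 2 ∧
    r = ⟨NT.C p q, [Symbol.nonterminal (NT.A p t), Symbol.nonterminal (NT.B t q)]⟩}

/-- S-rules of `G`:  `S → W C_{p,q} W`  for all `0 ≤ p, q ≤ d²`. -/
def SRules (d : ℕ) : Set (ContextFreeRule ℕ NT) :=
  {r | ∃ p q, p ≤ d ^ 2 ∧ q ≤ d ^ 2 ∧
    r = ⟨NT.S, [Symbol.nonterminal NT.W, Symbol.nonterminal (NT.C p q),
      Symbol.nonterminal NT.W]⟩}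

/-- The production set of the grammar `G` of the reduction. -/
def RulesG (m d : ℕ) (a b : ℕ → ℕ → ℕ) : Set (ContextFreeRule ℕ NT) :=
  WRules d ∪ ARules m d a ∪ BRules m d b ∪ CRules d ∪ SRules d

/-- One rewriting step using some rule from the rule set `R`. -/
def Produces (R : Set (ContextFreeRule ℕ NT)) (u v : List Sym) : Prop :=
  ∃ r ∈ R, r.Rewrites u v

/-- The usual context-free derivation relation `⇒*` for the rule set `R`. -/
def Derives (R : Set (ContextFreeRule ℕ NT)) : List Sym → List Sym → Prop :=
  Relation.ReflTransGen (Produces R)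

lemma derives_split {R : Set (ContextFreeRule ℕ NT)} {s w : List Sym}
    (h : Derives R s w) :
    ∀ u v : List Sym, s = u ++ v →
      ∃ w1 w2, w = w1 ++ w2 ∧ Derives R u w1 ∧ Derives R v w2 := by
  induction h using Relation.ReflTransGen.head_induction_on with
  | refl =>
    exact fun u v huv => ⟨u, v, huv, Relation.ReflTransGen.refl, Relation.ReflTransGen.refl⟩
  | head hp hder ih =>
    intro u v huv
    subst huv
    obtain ⟨r, hr, hrw⟩ := hp
    obtain ⟨p, q, hin, hout⟩ := hrw.exists_parts
    rw [List.append_assoc] at hin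
    rcases List.append_eq_append_iff.mp hin with ⟨a', ha1, ha2⟩ | ⟨c', hc1, hc2⟩
    · have hv' : Produces R v (a' ++ r.output ++ q) :=
        ⟨r, hr, by rw [ha2, ← List.append_assoc]; exact r.rewrites_of_exists_parts a' q⟩
      obtain ⟨w1, w2, hw, h1, h2⟩ := ih u (a' ++ r.output ++ q)
        (by rw [hout, ha1]; simp)
      exact ⟨w1, w2, hw, h1, Relation.ReflTransGen.head hv' h2⟩
    · cases c' with
      | nil =>
        simp only [List.nil_append] at hc2
        simp only [List.append_nil] at hc1
        have hv' : Produces R v (r.output ++ q) :=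
          ⟨r, hr, by rw [← hc2]; simpa using r.rewrites_of_exists_parts [] q⟩
        obtain ⟨w1, w2, hw, h1, h2⟩ := ih u (r.output ++ q)
          (by rw [hout, hc1]; simp)
        exact ⟨w1, w2, hw, h1, Relation.ReflTransGen.head hv' h2⟩
      | cons y c'' =>
        simp only [List.singleton_append, List.cons_append, List.cons.injEq] at hc2
        obtain ⟨rfl, hq⟩ := hc2
        simp only [List.nil_append] at hq
        have hu' : Produces R u (p ++ r.output ++ c'') :=
          ⟨r, hr, by rw [hc1]; simpa using r.rewrites_of_exists_parts p c''⟩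
        obtain ⟨w1, w2, hw, h1, h2⟩ := ih (p ++ r.output ++ c'') v
          (by rw [hout, hq]; simp)
        exact ⟨w1, w2, hw, Relation.ReflTransGen.head hu' h1, h2⟩

lemma derives_terminal {R : Set (ContextFreeRule ℕ NT)} {t : ℕ} {w : List Sym}
    (h : Derives R [Symbol.terminal t] w) : w = [Symbol.terminal t] := by
  rcases Relation.ReflTransGen.cases_head h with h' | ⟨x, hp, _⟩
  · exact h'.symm
  · exfalso
    obtain ⟨r, _, hrw⟩ := hp
    obtain ⟨p, q, hin, _⟩ := hrw.exists_parts
    cases p <;> simp_all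

lemma derives_nt {R : Set (ContextFreeRule ℕ NT)} {N : NT} {w : List Sym}
    (h : Derives R [Symbol.nonterminal N] w) (hw : w ≠ [Symbol.nonterminal N]) :
    ∃ r ∈ R, r.input = N ∧ Derives R r.output w := by
  rcases Relation.ReflTransGen.cases_head h with h' | ⟨x, hp, hd⟩
  · exact absurd h'.symm hw
  · obtain ⟨r, hr, hrw⟩ := hp
    obtain ⟨p, q, hin, hout⟩ := hrw.exists_parts
    have hpq : p = [] ∧ q = [] ∧ N = r.input := by
      cases p <;> simp_all
    obtain ⟨rfl, rfl, rfl⟩ := hpq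
    refine ⟨r, hr, rfl, ?_⟩
    rw [hout] at hd
    simpa [Derives] using hd

lemma map_term_ne_nt (l : List ℕ) (N : NT) :
    l.map Symbol.terminal ≠ [Symbol.nonterminal N] := by
  intro h
  have hmem : (Symbol.nonterminal N : Sym) ∈ l.map Symbol.terminal := by
    rw [h]; simp
  simp at hmem

lemma map_term_append {s n : ℕ} {l₁ l₂ : List Sym}
    (h : (List.range' s n).map Symbol.terminal = l₁ ++ l₂) :
    l₁.length ≤ n ∧
    l₁ = (List.range' s l₁.length).map Symbol.terminal ∧
    l₂ = (List.range' (s + l₁.length) (n - l₁.length)).map Symbol.terminal := by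
  have hlen : n = l₁.length + l₂.length := by
    have := congrArg List.length h; simpa using this
  have key := List.range'_append (s := s) (m := l₁.length) (n := l₂.length) (step := 1)
  simp only [one_mul] at key
  have hsplit : List.range' s n = List.range' s l₁.length ++ List.range' (s + l₁.length) l₂.length := by
    rw [hlen, ← key]
  rw [hsplit, List.map_append] at h
  have := List.append_inj h (by simp)
  refine ⟨by omega, this.1.symm, ?_⟩
  rw [show n - l₁.length = l₂.length from by omega]
  exact this.2.symm

lemma shape_eq {s k a1 a2 : ℕ} {x2 : List Sym}
    (h : (Symbol.terminal a1 : Sym) :: (x2 ++ [Symbol.terminal a2]) =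
         (List.range' s k).map Symbol.terminal) :
    a1 = s ∧ a2 = s + x2.length + 1 ∧ k = x2.length + 2 := by
  have hk : k = x2.length + 2 := by
    have := congrArg List.length h; simp at this; omega
  subst hk
  refine ⟨?_, ?_, rfl⟩
  · rw [show x2.length + 2 = (x2.length + 1) + 1 from rfl, List.range'_succ] at h
    simp only [List.map_cons, List.cons.injEq] at h
    exact Symbol.terminal.inj h.1
  · rw [show x2.length + 2 = (x2.length + 1) + 1 from rfl, List.range'_concat] at h
    simp only [one_mul, List.map_append, List.map_cons, List.map_nil] at h
    have h' : (Symbol.terminal a1 :: x2) ++ [Symbol.terminal a2] =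
        ((List.range' s (x2.length + 1)).map Symbol.terminal) ++ [Symbol.terminal (s + (x2.length + 1))] := by
      simpa using h
    have := (List.append_inj' h' (by simp)).2
    simp only [List.cons.injEq] at this
    have := Symbol.terminal.inj this.1
    omega

/-- **Converse direction of Theorem 1 of the paper.** For `1 ≤ i, j ≤ m`, if
`C_{i₁,j₁} ⇒* w_{i₂}^{j₂+2δ}` in the grammar `G`, then there exists `k` with
`1 ≤ k ≤ m`, `a_{ik} = 1` and `b_{kj} = 1` (i.e. `c_{ij} = 1` in `C = A × B`). -/
theorem bmm_entry_of_cnonterminal_derives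
    (m : ℕ) (hm : 1 ≤ m) (a b : ℕ → ℕ → ℕ)
    (ha : ∀ i j, a i j = 0 ∨ a i j = 1) (hb : ∀ i j, b i j = 0 ∨ b i j = 1)
    (d δ : ℕ) (hd : d = dOf m) (hδ : δ = d + 2)
    (i j : ℕ) (hi1 : 1 ≤ i) (him : i ≤ m) (hj1 : 1 ≤ j) (hjm : j ≤ m)
    (hder : Derives (RulesG m d a b) [Symbol.nonterminal (NT.C (i / d) (j / d))]
      (seg (i % d + 2) (j % d + 2 + 2 * δ))) :
    ∃ k, 1 ≤ k ∧ k ≤ m ∧ a i k = 1 ∧ b k j = 1 := by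
  subst hδ
  -- the first step must use a C-rule
  obtain ⟨r, hr, hrin, hrd⟩ := derives_nt hder (map_term_ne_nt _ _)
  simp only [RulesG, Set.mem_union] at hr
  rcases hr with ((((hrW | hrA) | hrB) | hrC) | hrS)
  · obtain ⟨l, -, -, rfl | rfl⟩ := hrW <;> simp at hrin
  · obtain ⟨i', j', -, -, -, -, -, rfl⟩ := hrA; simp at hrin
  · obtain ⟨i', j', -, -, -, -, -, rfl⟩ := hrB; simp at hrin
  swap
  · obtain ⟨p, q, -, -, rfl⟩ := hrS; simp at hrin
  obtain ⟨p, q, t, hp, hq, ht, rfl⟩ := hrC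
  simp only [NT.C.injEq] at hrin
  obtain ⟨rfl, rfl⟩ := hrin
  -- split the derivation from A_{p,t} B_{t,q}
  obtain ⟨w1, w2, hw, hA', hB'⟩ := derives_split hrd
    [Symbol.nonterminal (NT.A (i / d) t)] [Symbol.nonterminal (NT.B t (j / d))] rfl
  rw [seg] at hw
  obtain ⟨hk1, hw1, hw2⟩ := map_term_append hw
  -- analyze the derivation from A_{p,t}
  obtain ⟨r1, hr1, hr1in, hr1d⟩ := derives_nt hA' (by rw [hw1]; exact map_term_ne_nt _ _)
  simp only [RulesG, Set.mem_union] at hr1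
  rcases hr1 with ((((h1W | h1A) | h1B) | h1C) | h1S)
  · obtain ⟨l, -, -, rfl | rfl⟩ := h1W <;> simp at hr1in
  rotate_left
  · obtain ⟨i', j', -, -, -, -, -, rfl⟩ := h1B; simp at hr1in
  · obtain ⟨p', q', t', -, -, -, rfl⟩ := h1C; simp at hr1in
  · obtain ⟨p', q', -, -, rfl⟩ := h1S; simp at hr1in
  obtain ⟨ia, ja, hia1, hiam, hja1, hjam, haija, rfl⟩ := h1A
  simp only [NT.A.injEq] at hr1in
  obtain ⟨hiad, hjad⟩ := hr1in
  obtain ⟨u1, u23, hw1e, hu1, hu23⟩ := derives_split hr1d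
    [Symbol.terminal (ia % d + 2)]
    [Symbol.nonterminal NT.W, Symbol.terminal (ja % d + 2 + (d + 2))] rfl
  obtain ⟨u2, u3, hu23e, hu2, hu3⟩ := derives_split hu23
    [Symbol.nonterminal NT.W] [Symbol.terminal (ja % d + 2 + (d + 2))] rfl
  have hu1' := derives_terminal hu1
  have hu3' := derives_terminal hu3
  obtain ⟨hA1, hA2, hA3⟩ := shape_eq (a1 := ia % d + 2) (a2 := ja % d + 2 + (d + 2))
    (x2 := u2) (by rw [← hw1, hw1e, hu23e, hu1', hu3']; simp)
  -- analyze the derivation from B_{t,q}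
  obtain ⟨r2, hr2, hr2in, hr2d⟩ := derives_nt hB' (by rw [hw2]; exact map_term_ne_nt _ _)
  simp only [RulesG, Set.mem_union] at hr2
  rcases hr2 with ((((h2W | h2A) | h2B) | h2C) | h2S)
  · obtain ⟨l, -, -, rfl | rfl⟩ := h2W <;> simp at hr2in
  · obtain ⟨i', j', -, -, -, -, -, rfl⟩ := h2A; simp at hr2in
  rotate_left
  · obtain ⟨p', q', t', -, -, -, rfl⟩ := h2C; simp at hr2in
  · obtain ⟨p', q', -, -, rfl⟩ := h2S; simp at hr2in
  obtain ⟨ib, jb, hib1, hibm, hjb1, hjbm, hbibjb, rfl⟩ := h2B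
  simp only [NT.B.injEq] at hr2in
  obtain ⟨hibd, hjbd⟩ := hr2in
  obtain ⟨v1, v23, hw2e, hv1, hv23⟩ := derives_split hr2d
    [Symbol.terminal (ib % d + 2 + 1 + (d + 2))]
    [Symbol.nonterminal NT.W, Symbol.terminal (jb % d + 2 + 2 * (d + 2))] rfl
  obtain ⟨v2, v3, hv23e, hv2, hv3⟩ := derives_split hv23
    [Symbol.nonterminal NT.W] [Symbol.terminal (jb % d + 2 + 2 * (d + 2))] rfl
  have hv1' := derives_terminal hv1
  have hv3' := derives_terminal hv3
  obtain ⟨hB1, hB2, hB3⟩ := shape_eq (a1 := ib % d + 2 + 1 + (d + 2))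
    (a2 := jb % d + 2 + 2 * (d + 2)) (x2 := v2)
    (by rw [← hw2, hw2e, hv23e, hv1', hv3']; simp)
  -- now the arithmetic
  have hiamod : ia % d = i % d := by omega
  have hia : ia = i := by
    have e1 := Nat.div_add_mod ia d
    have e2 := Nat.div_add_mod i d
    rw [hiad, hiamod] at e1
    omega
  have hibmod : ib % d = ja % d := by omega
  have hib : ib = ja := by
    have e1 := Nat.div_add_mod ib d
    have e2 := Nat.div_add_mod ja d
    rw [hibd, hibmod] at e1
    rw [hjad] at e2
    omega
  have hjbmod : jb % d = j % d := by omega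
  have hjb : jb = j := by
    have e1 := Nat.div_add_mod jb d
    have e2 := Nat.div_add_mod j d
    rw [hjbd, hjbmod] at e1
    omega
  refine ⟨ja, hja1, hjam, ?_, ?_⟩
  · rw [← hia]; exact haija
  · rw [← hib, ← hjb]; exact hbibjb

end CFGBMM
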